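/- arXiv:1907.05579 — 4 statements merged into one kernel-verified Lean document; each statement's English description precedes it below -/
import Mathlib

section
/- Any partition of a directed graph into intervals produced by Allen's interval-construction algorithm yields sets that are pairwise disjoint and whose union is the set of all nodes reachable from the entry node. -/
/-- A directed walk of length `n` from `u` to `v`. -/
def HasWalk {V : Type*} (E : V → V → Prop) : ℕ → V → V → Prop
  | 0, u, v => u = v
  | n + 1, u, v => ∃ w, E u w ∧ HasWalk E n w v

/-- Allen's interval construction with header `h`, given already-covered nodes:
`I(h)` starts as `{h}`, and a node is added only if it is not in any previously
constructed interval and all of its immediate predecessors are already in `I(h)`. -/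
inductive InInterval {V : Type*} (E : V → V → Prop) (covered : Set V) (h : V) : V → Prop
  | head : InInterval E covered h h
  | step (v : V) : v ≠ h → v ∉ covered → (∀ u, E u v → InInterval E covered h u) →
      InInterval E covered h v

/-- A complete run of Allen's interval-partitioning algorithm on a graph with unique
entry node `v0`: headers are processed in order, the first header is `v0`, each later
header is an uncovered node with an immediate predecessor in a previously constructed
interval, and the run ends when no node outside the constructed intervals has an
immediate predecessor inside them. -/
structure AllenRun {V : Type*} (E : V → V → Prop) (v0 : V) : Type _ where
  n : ℕ
  header : ℕ → V
  covered : ℕ → Set V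
  hn : 0 < n
  head0 : header 0 = v0
  cov : ∀ k, covered k =
    ⋃ j ∈ Finset.range (min k n), {v | InInterval E (covered j) (header j) v}
  headFresh : ∀ k < n, header k ∉ covered k
  newHeader : ∀ k < n, 0 < k → ∃ u, E u (header k) ∧ u ∈ covered k
  complete : ∀ v, v ∉ covered n → ¬ ∃ u, u ∈ covered n ∧ E u v

/-- the intervals produced by Allen's algorithm are pairwise disjoint and
their union is the set of all nodes reachable from the entry node. -/
theorem stmt4 {V : Type*} (E : V → V → Prop) (v0 : V)
    (hreach : ∀ v : V, ∃ l, HasWalk E l v0 v)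
    (R : AllenRun E v0) :
    (∀ k1 < R.n, ∀ k2 < R.n, k1 ≠ k2 →
      Disjoint {v | InInterval E (R.covered k1) (R.header k1) v}
               {v | InInterval E (R.covered k2) (R.header k2) v}) ∧
    (⋃ k ∈ Finset.range R.n, {v | InInterval E (R.covered k) (R.header k) v}) =
      {v : V | ∃ l, HasWalk E l v0 v} := by
  have hcovn : R.covered R.n =
      ⋃ k ∈ Finset.range R.n, {v | InInterval E (R.covered k) (R.header k) v} := by
    simpa [min_self] using R.cov R.n
  have key : ∀ k1 k2, k1 < k2 → k2 < R.n →
      Disjoint {v | InInterval E (R.covered k1) (R.header k1) v}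
               {v | InInterval E (R.covered k2) (R.header k2) v} := by
    intro k1 k2 h12 h2n
    rw [Set.disjoint_left]
    intro v hv1 hv2
    have hsub : v ∈ R.covered k2 := by
      rw [R.cov k2]
      simp only [Set.mem_iUnion, Finset.mem_range]
      exact ⟨k1, by omega, hv1⟩
    cases hv2 with
    | head => exact R.headFresh k2 h2n hsub
    | step v hne hnc _ => exact hnc hsub
  have hclosed : ∀ (l : ℕ) (u v : V), u ∈ R.covered R.n → HasWalk E l u v →
      v ∈ R.covered R.n := by
    intro l
    induction l with
    | zero => intro u v hu hw; cases hw; exact hu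
    | succ l ih =>
      rintro u v hu ⟨w, hew, hw⟩
      have hwc : w ∈ R.covered R.n := by
        by_contra hwn
        exact R.complete w hwn ⟨u, hu, hew⟩
      exact ih w v hwc hw
  have hv0 : v0 ∈ R.covered R.n := by
    rw [hcovn]
    simp only [Set.mem_iUnion, Finset.mem_range]
    refine ⟨0, R.hn, ?_⟩
    have := R.head0
    show InInterval E (R.covered 0) (R.header 0) v0
    rw [this]
    exact InInterval.head
  constructor
  · intro k1 h1 k2 h2 hne
    rcases lt_or_gt_of_ne hne with h | h
    · exact key k1 k2 h h2
    · exact (key k2 k1 h h1).symm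
  · rw [← hcovn]
    ext v
    simp only [Set.mem_setOf_eq]
    constructor
    · intro _; exact hreach v
    · rintro ⟨l, hw⟩
      exact hclosed l v0 v hv0 hw
end

section
/- In an interval I(h) with header h, every closed (cyclic) directed path whose nodes all lie in I(h) must contain the header h. -/
namespace List

variable {α : Type*} {R : α → α → Prop}

theorem IsChain.exists_rel_of_mem_tail {a b : α} {t : List α} (hc : (a :: t).IsChain R)
    (hb : b ∈ t) : ∃ c ∈ a :: t, R c b := by
  induction t generalizing a with
  | nil => simp at hb
  | cons x t ih =>
    rw [isChain_cons_cons] at hc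
    rcases mem_cons.mp hb with rfl | hbt
    · exact ⟨a, mem_cons_self, hc.1⟩
    · obtain ⟨c, hc', hcb⟩ := ih hc.2 hbt
      exact ⟨c, mem_cons_of_mem a hc', hcb⟩

theorem mem_tail_of_head?_eq_getLast? {a : α} {t : List α} (ht : t ≠ [])
    (hclosed : (a :: t).head? = (a :: t).getLast?) : a ∈ t := by
  rw [head?_cons, getLast?_eq_some_getLast (cons_ne_nil a t), getLast_cons ht,
    Option.some_inj] at hclosed
  exact hclosed ▸ getLast_mem ht

theorem IsChain.exists_rel_of_head?_eq_getLast? {l : List α} (hlen : 2 ≤ l.length)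
    (hc : l.IsChain R) (hclosed : l.head? = l.getLast?) {b : α} (hb : b ∈ l) :
    ∃ c ∈ l, R c b := by
  rcases l with _ | ⟨a, _ | ⟨x, t⟩⟩
  · simp at hlen
  · simp at hlen
  refine hc.exists_rel_of_mem_tail ?_
  rcases mem_cons.mp hb with rfl | hbt
  · exact mem_tail_of_head?_eq_getLast? (cons_ne_nil x t) hclosed
  · exact hbt

end List

theorem InInterval.header_mem_of_forall_exists_pred {V : Type*} {E : V → V → Prop}
    {covered : Set V} {h v : V} {S : Set V} (hS : ∀ w ∈ S, ∃ u ∈ S, E u w)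
    (hv : InInterval E covered h v) (hvS : v ∈ S) : h ∈ S := by
  induction hv with
  | head => exact hvS
  | step w _ _ _ ih =>
    obtain ⟨u, huS, huw⟩ := hS w hvS
    exact ih u huw huS

/-- every closed directed path whose nodes all lie in the interval I(h)
must contain the header `h`. A closed path is represented by a list of at least two
nodes, consecutive nodes joined by edges, whose first and last nodes coincide. -/
theorem stmt6 {V : Type*} (E : V → V → Prop) (covered : Set V) (h : V)
    (l : List V) (hlen : 2 ≤ l.length) (hchain : l.Chain' E)
    (hclosed : l.head? = l.getLast?)
    (hmem : ∀ v ∈ l, InInterval E covered h v) :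
    h ∈ l := by
  obtain ⟨a, ha⟩ : ∃ a, a ∈ l := List.exists_mem_of_length_pos (by omega)
  exact (hmem a ha).header_mem_of_forall_exists_pred (S := {v | v ∈ l})
    (fun _ hw => hchain.exists_rel_of_head?_eq_getLast? hlen hclosed hw) ha
end

section
/- If every node of a directed graph G is reachable from the entry node v0, then Allen's interval-partitioning algorithm terminates with every node of G assigned to exactly one interval. -/
section Aux

variable {V : Type*} (E : V → V → Prop) (v0 : V)

open Classical in
noncomputable def pickH (S : Set V) : V :=
  if h : ∃ v, v ∉ S ∧ ∃ u ∈ S, E u v then Classical.choose h else v0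

open Classical in
noncomputable def gset : ℕ → Set V
  | 0 => ∅
  | k + 1 => gset k ∪ {v | InInterval E (gset k) (pickH E v0 (gset k)) v}

variable {E v0}

lemma pickH_spec {S : Set V} (h : ∃ v, v ∉ S ∧ ∃ u ∈ S, E u v) :
    pickH E v0 S ∉ S ∧ ∃ u ∈ S, E u (pickH E v0 S) := by
  rw [pickH, dif_pos h]; exact Classical.choose_spec h

lemma pickH_empty : pickH E v0 (∅ : Set V) = v0 := by
  rw [pickH, dif_neg]; rintro ⟨v, -, u, hu, -⟩; exact hu

lemma gset_mono : Monotone (gset E v0) :=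
  monotone_nat_of_le_succ (fun k => Set.subset_union_left)

lemma gset_eq (m : ℕ) : gset E v0 m =
    ⋃ j ∈ Finset.range m, {v | InInterval E (gset E v0 j) (pickH E v0 (gset E v0 j)) v} := by
  induction m with
  | zero => simp [gset]
  | succ m ih =>
    show gset E v0 m ∪ _ = _
    rw [Finset.range_add_one, Finset.set_biUnion_insert, ← ih, Set.union_comm]

lemma exists_stop [Fintype V] :
    ∃ k, 1 ≤ k ∧ ¬∃ v, v ∉ gset E v0 k ∧ ∃ u ∈ gset E v0 k, E u v := by
  by_contra hc
  push_neg at hc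
  have fresh : ∀ k, pickH E v0 (gset E v0 k) ∉ gset E v0 k := by
    intro k
    match k with
    | 0 => simp [gset]
    | k + 1 => exact (pickH_spec (hc _ (Nat.succ_le_succ (Nat.zero_le _)))).1
  have grow : ∀ k, k ≤ (gset E v0 k).ncard := by
    intro k
    induction k with
    | zero => exact Nat.zero_le _
    | succ k ih =>
      have hlt : gset E v0 k ⊂ gset E v0 (k+1) := by
        refine ⟨Set.subset_union_left, fun hsub => (fresh k) (hsub ?_)⟩
        exact Set.mem_union_right _ InInterval.head
      have := Set.ncard_lt_ncard hlt (Set.toFinite _)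
      omega
  have := grow (Fintype.card V + 1)
  have hle : (gset E v0 (Fintype.card V + 1)).ncard ≤ Fintype.card V := by
    have := Set.ncard_le_ncard (Set.subset_univ (gset E v0 (Fintype.card V + 1))) Set.finite_univ
    rwa [Set.ncard_univ, Nat.card_eq_fintype_card] at this
  omega

end Aux
/-- on a finite directed graph in which every node is reachable from the
unique entry node `v0`, Allen's algorithm terminates with every node assigned to
exactly one interval. -/
theorem stmt8 {V : Type*} [Fintype V] (E : V → V → Prop) (v0 : V)
    (hreach : ∀ v : V, ∃ l, HasWalk E l v0 v) :
    ∃ R : AllenRun E v0, ∀ v : V,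
      ∃! k : ℕ, k < R.n ∧ InInterval E (R.covered k) (R.header k) v := by
  classical
  set g := gset E v0 with hg
  have hP : ∃ k, 1 ≤ k ∧ ¬∃ v, v ∉ g k ∧ ∃ u ∈ g k, E u v := exists_stop
  set n := Nat.find hP with hndef
  have hn1 : 1 ≤ n := (Nat.find_spec hP).1
  have hstop : ¬∃ v, v ∉ g n ∧ ∃ u ∈ g n, E u v := (Nat.find_spec hP).2
  have hfront : ∀ k, 1 ≤ k → k < n → ∃ v, v ∉ g k ∧ ∃ u ∈ g k, E u v := by
    intro k h1 hk
    have h := Nat.find_min hP hk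
    by_contra hc
    exact h ⟨h1, hc⟩
  have hmin : ∀ j, j < n → min j n = j := fun j hj => min_eq_left hj.le
  have hfresh : ∀ k, k < n → pickH E v0 (g k) ∉ g k := by
    intro k hk
    match k with
    | 0 => simp [hg, gset]
    | k + 1 => exact (pickH_spec (hfront _ (Nat.succ_le_succ (Nat.zero_le _)) hk)).1
  refine ⟨⟨n, fun k => pickH E v0 (g k), fun k => g (min k n), hn1, ?_, ?_, ?_, ?_, ?_⟩, ?_⟩
  · show pickH E v0 (g 0) = v0
    simpa [hg, gset] using pickH_empty
  · -- cov
    intro k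
    show g (min k n) = _
    rw [hg, gset_eq]
    exact Set.iUnion_congr fun j => Set.iUnion_congr fun hj => by
      simp only [hmin j (lt_of_lt_of_le (Finset.mem_range.mp hj) (min_le_right k n))]
  · -- headFresh
    intro k hk
    show pickH E v0 (g k) ∉ g (min k n)
    rw [hmin k hk]
    exact hfresh k hk
  · -- newHeader
    intro k hk h0
    show ∃ u, E u (pickH E v0 (g k)) ∧ u ∈ g (min k n)
    rw [hmin k hk]
    obtain ⟨u, hu, hE⟩ := (pickH_spec (hfront k h0 hk)).2
    exact ⟨u, hE, hu⟩
  · -- complete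
    intro v hv ⟨u, hu, hE⟩
    have hv2 : v ∉ g (min n n) := hv
    have hu2 : u ∈ g (min n n) := hu
    rw [min_self] at hv2 hu2
    exact hstop ⟨v, hv2, u, hu2, hE⟩
  · -- main conclusion
    intro v
    have hclosed : ∀ l u v, u ∈ g n → HasWalk E l u v → v ∈ g n := by
      intro l
      induction l with
      | zero => intro u v hu h; exact h ▸ hu
      | succ l ih =>
        rintro u v hu ⟨w, huw, hwv⟩
        refine ih w v ?_ hwv
        by_contra hw
        exact hstop ⟨w, hw, u, hu, huw⟩
    have hv0 : v0 ∈ g n := by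
      have h1 : v0 ∈ g 1 := by
        refine Set.mem_union_right _ ?_
        show InInterval E (gset E v0 0) (pickH E v0 (gset E v0 0)) v0
        rw [show pickH E v0 (gset E v0 0) = v0 from by simpa [gset] using pickH_empty]
        exact InInterval.head
      exact gset_mono hn1 h1
    have hvn : v ∈ g n := by
      obtain ⟨l, hl⟩ := hreach v
      exact hclosed l v0 v hv0 hl
    rw [hg, gset_eq] at hvn
    simp only [Set.mem_iUnion, Finset.mem_range] at hvn
    obtain ⟨k, hk, hvk⟩ := hvn
    have hsub : ∀ j, j < n → {w | InInterval E (g j) (pickH E v0 (g j)) w} ⊆ g (j + 1) := by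
      intro j _ w hw
      exact Set.mem_union_right _ hw
    have hdisj : ∀ j k, j < k → k < n →
        InInterval E (g j) (pickH E v0 (g j)) v →
        InInterval E (g k) (pickH E v0 (g k)) v → False := by
      intro j k hjk hkn hj hk'
      have hvk' : v ∉ g k := by
        cases hk' with
        | head => exact hfresh k hkn
        | step _ _ hnc _ => exact hnc
      exact hvk' (gset_mono hjk (hsub j (hjk.trans hkn) hj))
    refine ⟨k, ⟨hk, ?_⟩, ?_⟩
    · show InInterval E (g (min k n)) (pickH E v0 (g k)) v
      rw [hmin k hk]
      exact hvk
    rintro k' ⟨hk', hvk'⟩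
    have hk'n : k' < n := hk'
    have hvk2 : InInterval E (g (min k' n)) (pickH E v0 (g k')) v := hvk'
    rw [hmin k' hk'n] at hvk2
    rcases lt_trichotomy k' k with h | h | h
    · exact absurd (hdisj k' k h hk hvk2 hvk) not_false
    · exact h
    · exact absurd (hdisj k k' h hk'n hvk hvk2) not_false
end

section
/- In any directed graph partitioned into intervals, the only edges between distinct intervals either terminate at an interval header or originate from a node of one interval and enter the header of another; formally, if (u, v) is an edge with u ∈ I(h1), v ∈ I(h2), and I(h1) ≠ I(h2), then v = h2. -/
/-- Distinct intervals of an Allen run are disjoint. -/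
lemma AllenRun.disjoint {V : Type*} {E : V → V → Prop} {v0 : V} (R : AllenRun E v0)
    {j k : ℕ} (hjk : j < k) (hk : k < R.n) {u : V}
    (hj : InInterval E (R.covered j) (R.header j) u)
    (hkI : InInterval E (R.covered k) (R.header k) u) : False := by
  have hcov : u ∈ R.covered k := by
    rw [R.cov k]
    exact Set.mem_biUnion (Finset.mem_range.mpr (lt_min hjk (hjk.trans hk))) hj
  cases hkI with
  | head => exact R.headFresh k hk hcov
  | step _ _ hnc _ => exact hnc hcov

/-- in the interval partition, every edge `(u, v)` going from one
interval I(h1) into a distinct interval I(h2) terminates at the header h2. -/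
theorem stmt19 {V : Type*} (E : V → V → Prop) (v0 : V) (R : AllenRun E v0)
    (k1 k2 : ℕ) (hk1 : k1 < R.n) (hk2 : k2 < R.n) (hne : k1 ≠ k2)
    (u v : V)
    (hu : InInterval E (R.covered k1) (R.header k1) u)
    (hv : InInterval E (R.covered k2) (R.header k2) v)
    (huv : E u v) :
    v = R.header k2 := by
  cases hv with
  | head => rfl
  | step v hvh hvnc hpred =>
    exfalso
    have hu2 : InInterval E (R.covered k2) (R.header k2) u := hpred u huv
    rcases lt_or_gt_of_ne hne with h | h
    · exact R.disjoint h hk2 hu hu2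
    · exact R.disjoint h hk1 hu2 hu
end
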